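/- Let $p = (p_1,\ldots,p_N)$ with $p_1 < p_2$, $0 < h \le (p_2-p_1)/2$, and $p' = (p_1+h, p_2-h, p_3,\ldots,p_N)$. If at least $k-1$ of the values $p_3,\ldots,p_N$ are nonzero, then for all $n \ge k+1$ the inequality is strict: $P_p(Y_n \le k) > P_{p'}(Y_n \le k)$. -/

import Mathlib

/-!
Merge the values `1` and `2` into one. Given the merged sequence, let `A` be the set of
positions carrying the merged value and `c` the number of distinct values it shows; the
sequences with that merged sequence are obtained by choosing the subset `s ⊆ A` of positions
that get value `2`, and their weight is a common factor times `p₂^|s| p₁^(|A|-|s|)`.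
The number of distinct values is `c`, or `c + 1` when `s` is neither empty nor `A`. So for
`c < k` every choice counts, with total `(p₁ + p₂)^|A|`; for `c = k` only the constant choices
count, with total `p₁^|A| + p₂^|A|`. The move `(p₁, p₂) ↦ (p₁ + h, p₂ - h)` keeps `p₁ + p₂`
and, by convexity of `t ↦ t^m`, strictly decreases `p₁^m + p₂^m` for `m ≥ 2`. Strictness
comes from a merged sequence with `|A| ≥ 2` showing the merged value and `k - 1` values among
`3, …, N` of positive probability, which exists since `n ≥ k + 1`.
-/

/-- The probability of an event `E` for `n` i.i.d. draws from the distribution `p`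
on `{1, …, N}`: the sum of the product weights of the outcome sequences in `E`. -/
noncomputable def prob {N : ℕ} (p : Fin N → ℝ) {n : ℕ} (E : Set (Fin n → Fin N)) : ℝ :=
  ∑ ω : Fin n → Fin N, Set.indicator E (fun ω => ∏ i, p (ω i)) ω

/-- The number of distinct values drawn, `Y_n`. -/
noncomputable def distinctCount {N n : ℕ} (ω : Fin n → Fin N) : ℕ :=
  (Finset.univ.image ω).card

open Finset

theorem pow_add_sub_pow_eq (x h : ℝ) (m : ℕ) :
    (x + h) ^ m - x ^ m = (∑ i ∈ range m, (x + h) ^ i * x ^ (m - 1 - i)) * h := by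
  simpa using (geom_sum₂_mul (x + h) x m).symm

theorem pow_add_sub_pow_le {x y h : ℝ} (hx : 0 ≤ x) (hh : 0 ≤ h) (hxy : x ≤ y) (m : ℕ) :
    (x + h) ^ m - x ^ m ≤ (y + h) ^ m - y ^ m := by
  rw [pow_add_sub_pow_eq, pow_add_sub_pow_eq]
  gcongr
  exact pow_nonneg (by linarith) _

theorem pow_add_add_pow_sub_le {x y h : ℝ} (hx : 0 ≤ x) (hh : 0 ≤ h) (hxy : x + h ≤ y)
    (m : ℕ) : (x + h) ^ m + (y - h) ^ m ≤ x ^ m + y ^ m := by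
  have := pow_add_sub_pow_le hx hh (by linarith : x ≤ y - h) m
  rw [sub_add_cancel] at this
  linarith

theorem pow_add_sub_pow_lt {x y h : ℝ} (hx : 0 ≤ x) (hh : 0 < h) (hxy : x < y) {m : ℕ}
    (hm : 2 ≤ m) : (x + h) ^ m - x ^ m < (y + h) ^ m - y ^ m := by
  rw [pow_add_sub_pow_eq, pow_add_sub_pow_eq]
  refine mul_lt_mul_of_pos_right (sum_lt_sum (fun i _ => ?_) ⟨0, by simp; omega, ?_⟩) hh
  · gcongr
    exact pow_nonneg (by linarith) _
  · simpa using pow_lt_pow_left₀ hxy hx (by omega : m - 1 ≠ 0)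

theorem pow_add_add_pow_sub_lt {x y h : ℝ} (hx : 0 ≤ x) (hh : 0 < h) (hxy : x + h < y)
    {m : ℕ} (hm : 2 ≤ m) : (x + h) ^ m + (y - h) ^ m < x ^ m + y ^ m := by
  have := pow_add_sub_pow_lt hx hh (by linarith : x < y - h) hm
  rw [sub_add_cancel] at this
  linarith

section RelabelMass
variable {ι : Type*} [DecidableEq ι]

/-- `s` is the set of positions of `A` relabelled from `a` (weight `x`) to `b` (weight `y`);
this creates one new value, raising the count `c` by one, unless `s` is empty or all of `A`. -/
def relabelMass (c k : ℕ) (x y : ℝ) (A : Finset ι) : ℝ :=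
  ∑ s ∈ A.powerset, if c + (if s = ∅ ∨ s = A then 0 else 1) ≤ k then y ^ #s * x ^ (#A - #s) else 0

theorem relabelMass_eq (c k : ℕ) (x y : ℝ) (A : Finset ι) :
    relabelMass c k x y A = if c < k then (x + y) ^ #A
      else if c = k then (if A = ∅ then 1 else x ^ #A + y ^ #A) else 0 := by
  unfold relabelMass
  rcases lt_trichotomy c k with hck | rfl | hck
  · rw [if_pos hck, add_comm x, ← sum_pow_mul_eq_add_pow]
    exact sum_congr rfl fun s _ => if_pos (by split_ifs <;> omega)
  · rcases eq_or_ne A ∅ with rfl | hA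
    · simp
    have hext : A.powerset.filter (fun s => s = ∅ ∨ s = A) = {∅, A} := by
      ext s
      simp only [mem_filter, mem_powerset, mem_insert, mem_singleton, and_iff_right_iff_imp]
      rintro (rfl | rfl) <;> simp
    simp only [lt_irrefl, if_false, if_true, if_neg hA, add_le_iff_nonpos_right,
      nonpos_iff_eq_zero, ite_eq_left_iff, one_ne_zero, imp_false, not_not]
    rw [← sum_filter, hext, sum_pair (Ne.symm hA)]
    simp
  · rw [if_neg (by omega), if_neg (by omega)]
    exact sum_eq_zero fun s _ => if_neg (by omega)

theorem relabelMass_le {c k : ℕ} {x y x' y' : ℝ} (A : Finset ι) (hsum : x + y = x' + y')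
    (hpow : ∀ m, x ^ m + y ^ m ≤ x' ^ m + y' ^ m) :
    relabelMass c k x y A ≤ relabelMass c k x' y' A := by
  rw [relabelMass_eq, relabelMass_eq, hsum]
  split_ifs <;> first | exact le_rfl | exact hpow _

theorem relabelMass_lt {k : ℕ} {x y x' y' : ℝ} {A : Finset ι} (hA : 2 ≤ #A)
    (hpow : x ^ #A + y ^ #A < x' ^ #A + y' ^ #A) :
    relabelMass k k x y A < relabelMass k k x' y' A := by
  have hA0 : A ≠ ∅ := by rintro rfl; simp at hA
  simpa [relabelMass_eq, hA0] using hpow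

end RelabelMass

variable {N n : ℕ}

def mergeInto (a b : Fin N) (ω : Fin n → Fin N) : Fin n → Fin N :=
  fun i => if ω i = b then a else ω i

theorem piecewise_filter_mergeInto (a b : Fin N) (ω : Fin n → Fin N) :
    (univ.filter (ω · = b)).piecewise (fun _ => b) (mergeInto a b ω) = ω := by
  ext i
  by_cases hi : ω i = b <;> simp [mergeInto, hi]

theorem sum_eq_sum_sum_piecewise {β : Type*} [AddCommMonoid β] {a b : Fin N} (hab : a ≠ b)
    (F : (Fin n → Fin N) → β) :
    ∑ ω, F ω = ∑ τ with ∀ i, τ i ≠ b,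
      ∑ s ∈ (univ.filter (τ · = a)).powerset, F (s.piecewise (fun _ => b) τ) := by
  rw [← sum_finset_product' (univ.filter fun x : (Fin n → Fin N) × Finset (Fin n) =>
      (∀ i, x.1 i ≠ b) ∧ x.2 ⊆ univ.filter (x.1 · = a)) _ _ (by simp)]
  refine sum_nbij' (fun ω => (mergeInto a b ω, univ.filter (ω · = b)))
    (fun x => x.2.piecewise (fun _ => b) x.1) (fun ω _ => ?_) (by simp)
    (fun ω _ => piecewise_filter_mergeInto a b ω) (fun x hx => ?_)
    (fun ω _ => by rw [piecewise_filter_mergeInto])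
  · simp only [mem_filter, mem_univ, true_and, mergeInto, subset_iff]
    refine ⟨fun i => ?_, fun i => ?_⟩ <;> split_ifs <;> simp_all
  · obtain ⟨τ, s⟩ := x
    simp only [mem_filter, mem_univ, true_and, subset_iff] at hx
    ext i
    · by_cases hi : i ∈ s <;> simp_all [mergeInto]
    · by_cases hi : i ∈ s <;> simp_all

theorem distinctCount_piecewise {a b : Fin N} {τ : Fin n → Fin N} {s : Finset (Fin n)}
    (hτ : ∀ i, τ i ≠ b) (hs : s ⊆ univ.filter (τ · = a)) :
    distinctCount (s.piecewise (fun _ => b) τ)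
      = distinctCount τ + if s = ∅ ∨ s = univ.filter (τ · = a) then 0 else 1 := by
  unfold distinctCount
  rcases eq_or_ne s ∅ with rfl | hs0
  · simp
  by_cases hsA : s = univ.filter (τ · = a)
  · have hswap : s.piecewise (fun _ => b) τ = Equiv.swap a b ∘ τ := by
      ext i
      by_cases hi : τ i = a
      · simp [hsA, hi]
      · simp [hsA, hi, Equiv.swap_apply_of_ne_of_ne hi (hτ i)]
    rw [if_pos (Or.inr hsA), add_zero, hswap, ← image_image,
      card_image_of_injective _ (Equiv.injective _)]
  · obtain ⟨i, hi⟩ := nonempty_iff_ne_empty.2 hs0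
    obtain ⟨j, hjA, hjs⟩ := not_subset.1 fun h => hsA (subset_antisymm hs h)
    have hj : τ j = a := by simpa using hjA
    have himage : univ.image (s.piecewise (fun _ => b) τ) = insert b (univ.image τ) := by
      ext v
      simp only [mem_image, mem_univ, true_and, mem_insert]
      constructor
      · rintro ⟨l, rfl⟩
        by_cases hl : l ∈ s <;> simp [hl]
      · rintro (rfl | ⟨l, rfl⟩)
        · exact ⟨i, by simp [hi]⟩
        · by_cases hl : l ∈ s
          · exact ⟨j, by simp [hjs, hj, (by simpa using hs hl : τ l = a)]⟩
          · exact ⟨l, by simp [hl]⟩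
    rw [if_neg (by tauto), himage, card_insert_of_notMem (by simpa using hτ)]

theorem prod_apply_piecewise_eq {a b : Fin N} {τ : Fin n → Fin N} {s : Finset (Fin n)}
    (hs : s ⊆ univ.filter (τ · = a)) (r : Fin N → ℝ) :
    ∏ i, r (s.piecewise (fun _ => b) τ i)
      = r b ^ #s * r a ^ (#(univ.filter (τ · = a)) - #s)
        * ∏ i with τ i ≠ a, r (τ i) := by
  set A := univ.filter (τ · = a)
  have hA : ∏ i ∈ A, r (s.piecewise (fun _ => b) τ i) = r b ^ #s * r a ^ (#A - #s) := by
    rw [← prod_sdiff hs, mul_comm, ← card_sdiff_of_subset hs]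
    congr 1
    · exact prod_eq_pow_card fun i hi => by simp [hi]
    · refine prod_eq_pow_card fun i hi => ?_
      obtain ⟨hiA, his⟩ := mem_sdiff.1 hi
      simp [his, (mem_filter.1 hiA).2]
  have hAc : ∏ i with τ i ≠ a, r (s.piecewise (fun _ => b) τ i) = ∏ i with τ i ≠ a, r (τ i) :=
    prod_congr rfl fun i hi => by
      rw [piecewise_eq_of_notMem _ _ _ fun his => (mem_filter.1 hi).2 (mem_filter.1 (hs his)).2]
  rw [← prod_filter_mul_prod_filter_not univ (τ · = a), hA, hAc]

theorem prob_setOf_distinctCount_le (r : Fin N → ℝ) (k : ℕ) :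
    prob r {ω : Fin n → Fin N | distinctCount ω ≤ k}
      = ∑ ω : Fin n → Fin N, if distinctCount ω ≤ k then ∏ i, r (ω i) else 0 := by
  unfold prob
  congr! 1 with ω
  simp [Set.indicator_apply]

theorem sum_powerset_piecewise_eq_mul_relabelMass {a b : Fin N} {τ : Fin n → Fin N} (hτ : ∀ i, τ i ≠ b)
    (r : Fin N → ℝ) (k : ℕ) :
    ∑ s ∈ (univ.filter (τ · = a)).powerset,
        (if distinctCount (s.piecewise (fun _ => b) τ) ≤ k
          then ∏ i, r (s.piecewise (fun _ => b) τ i) else 0)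
      = (∏ i with τ i ≠ a, r (τ i))
        * relabelMass (distinctCount τ) k (r a) (r b) (univ.filter (τ · = a)) := by
  rw [relabelMass, mul_sum]
  refine sum_congr rfl fun s hs => ?_
  rw [mem_powerset] at hs
  rw [distinctCount_piecewise hτ hs, prod_apply_piecewise_eq hs, mul_ite, mul_zero, mul_comm]

theorem prob_distinctCount_le_lt_of_pow_add_pow_lt {p q : Fin N → ℝ} {a b : Fin N} (hab : a ≠ b)
    (hp : ∀ i, 0 ≤ p i) (hqp : ∀ i, i ≠ a → i ≠ b → q i = p i)
    (hsum : q a + q b = p a + p b) (hpow : ∀ m, q a ^ m + q b ^ m ≤ p a ^ m + p b ^ m)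
    (hpow_lt : ∀ m, 2 ≤ m → q a ^ m + q b ^ m < p a ^ m + p b ^ m)
    {k : ℕ} {τ : Fin n → Fin N} (hτb : ∀ i, τ i ≠ b) (hτk : distinctCount τ = k)
    (hτa : 2 ≤ #(univ.filter (τ · = a))) (hτp : ∀ i, τ i ≠ a → p (τ i) ≠ 0) :
    prob q {ω : Fin n → Fin N | distinctCount ω ≤ k}
      < prob p {ω : Fin n → Fin N | distinctCount ω ≤ k} := by
  have hweight : ∀ σ : Fin n → Fin N, (∀ i, σ i ≠ b) →
      ∏ i with σ i ≠ a, q (σ i) = ∏ i with σ i ≠ a, p (σ i) :=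
    fun σ hσ => prod_congr rfl fun i hi => hqp _ (mem_filter.1 hi).2 (hσ i)
  simp only [prob_setOf_distinctCount_le, sum_eq_sum_sum_piecewise hab _]
  refine sum_lt_sum (fun σ hσ => ?_) ⟨τ, by simpa using hτb, ?_⟩
  · replace hσ : ∀ i, σ i ≠ b := by simpa using hσ
    rw [sum_powerset_piecewise_eq_mul_relabelMass hσ, sum_powerset_piecewise_eq_mul_relabelMass hσ, hweight σ hσ]
    exact mul_le_mul_of_nonneg_left (relabelMass_le _ hsum hpow)
      (prod_nonneg fun i _ => hp _)
  · rw [sum_powerset_piecewise_eq_mul_relabelMass hτb, sum_powerset_piecewise_eq_mul_relabelMass hτb, hweight τ hτb, hτk]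
    exact mul_lt_mul_of_pos_left (relabelMass_lt hτa (hpow_lt _ hτa))
      (prod_pos fun i hi => (hp _).lt_of_ne' (hτp i (mem_filter.1 hi).2))

theorem exists_image_eq_insert (T : Finset (Fin N)) (a : Fin N) (hn : #T + 2 ≤ n) :
    ∃ τ : Fin n → Fin N, univ.image τ = insert a T ∧ 2 ≤ #(univ.filter (τ · = a)) := by
  refine ⟨fun i => if h : (i : ℕ) < #T then T.equivFin.symm ⟨i, h⟩ else a, ?_, ?_⟩
  · ext v
    simp only [mem_image, mem_univ, true_and, mem_insert]
    constructor
    · rintro ⟨i, rfl⟩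
      split_ifs <;> simp
    · rintro (rfl | hv)
      · exact ⟨⟨n - 1, by omega⟩, by simp; omega⟩
      · refine ⟨⟨T.equivFin ⟨v, hv⟩, by omega⟩, ?_⟩
        simp
  · refine one_lt_card.2 ⟨⟨n - 1, by omega⟩, ?_, ⟨n - 2, by omega⟩, ?_, ?_⟩
    all_goals simp; omega

/-- Theorem 6.1 (strict form): if moreover at least `k - 1` of the values
`p_3, …, p_N` are nonzero, then for all `n ≥ k + 1` the inequality is strict. -/
theorem stmt_18 (N : ℕ) (hN : 2 ≤ N) (p : Fin N → ℝ) (hp : ∀ i, 0 ≤ p i)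
    (h : ℝ) (hh0 : 0 < h)
    (hh : h ≤ (p ⟨1, by omega⟩ - p ⟨0, by omega⟩) / 2)
    (n k : ℕ) (hk1 : 1 ≤ k)
    (hnz : k - 1 ≤ (Finset.univ.filter (fun i : Fin N => 2 ≤ (i : ℕ) ∧ p i ≠ 0)).card)
    (hn : k + 1 ≤ n) :
    prob (fun i : Fin N => if (i : ℕ) = 0 then p i + h else if (i : ℕ) = 1 then p i - h else p i)
        {ω : Fin n → Fin N | distinctCount ω ≤ k}
      < prob p {ω : Fin n → Fin N | distinctCount ω ≤ k} := by
  obtain ⟨T, hTsub, hTcard⟩ := exists_subset_card_eq hnz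
  have hT : ∀ v ∈ T, 2 ≤ (v : ℕ) ∧ p v ≠ 0 := fun v hv => (mem_filter.1 (hTsub hv)).2
  obtain ⟨τ, himage, hτa⟩ := exists_image_eq_insert T ⟨0, by omega⟩ (n := n) (by omega)
  have hτ : ∀ i, τ i = ⟨0, by omega⟩ ∨ τ i ∈ T := fun i =>
    mem_insert.1 (himage ▸ mem_image_of_mem τ (mem_univ i))
  have hbal : p ⟨0, by omega⟩ + h < p ⟨1, by omega⟩ := by linarith
  refine prob_distinctCount_le_lt_of_pow_add_pow_lt (a := ⟨0, by omega⟩) (b := ⟨1, by omega⟩) (by simp) hp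
    (fun i hi0 hi1 => ?_) (by simp) (fun m => ?_) (fun m hm => ?_) (τ := τ)
    (fun i => ?_) ?_ hτa (fun i hi => ?_)
  · simp only [ne_eq, Fin.ext_iff] at hi0 hi1
    simp [hi0, hi1]
  · simpa using pow_add_add_pow_sub_le (hp _) hh0.le hbal.le m
  · simpa using pow_add_add_pow_sub_lt (hp _) hh0 hbal hm
  · rcases hτ i with hi | hi
    · simp [hi]
    · have := (hT _ hi).1
      simp [Fin.ext_iff]; omega
  · have h0T : (⟨0, by omega⟩ : Fin N) ∉ T := fun h0 => by simpa using (hT _ h0).1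
    rw [distinctCount, himage, card_insert_of_notMem h0T]
    omega
  · exact (hT _ ((hτ i).resolve_left hi)).2
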